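/- For any integer k ≥ 1, the k-th elementary symmetric function of 1, 1/3, ..., 1/(2k+5) equals (k+1)(k+2)(k+3)²(k²+5k+5) / (6 ∏_{i=0}^{k+2} (1+2i)). -/

import Mathlib

/-!
Complementation inside `{0, …, n - 1}` turns a product of `k` reciprocals `1 / (2i + 1)` into the
product of the remaining `n - k` odd numbers divided by the product of all `n` of them. For
`n = k + 3` the claim therefore reduces to a closed form for the third elementary symmetric
function of `1, 3, …, 2n - 1`, which follows from the recursion
`e_{j+1}(n + 1) = e_{j+1}(n) + (2n + 1) e_j(n)` by computing `e_1`, `e_2`, `e_3` in turn.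
-/

open Finset

theorem Multiset.esymm_cons_succ {R : Type*} [CommSemiring R] (a : R) (s : Multiset R) (n : ℕ) :
    (a ::ₘ s).esymm (n + 1) = s.esymm (n + 1) + a * s.esymm n := by
  simp only [esymm, powersetCard_cons, map_add, sum_add, map_map, Function.comp_def, prod_cons,
    sum_map_mul_left]

namespace Finset

variable {α R : Type*} [DecidableEq α]

theorem sum_powersetCard_succ_insert_prod [CommSemiring R] {a : α} {s : Finset α} (ha : a ∉ s)
    (n : ℕ) (f : α → R) :
    ∑ t ∈ (insert a s).powersetCard (n + 1), ∏ i ∈ t, f i =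
      ∑ t ∈ s.powersetCard (n + 1), ∏ i ∈ t, f i + f a * ∑ t ∈ s.powersetCard n, ∏ i ∈ t, f i := by
  simp only [← esymm_map_val, insert_val_of_notMem ha, Multiset.map_cons,
    Multiset.esymm_cons_succ]

theorem sum_powersetCard_sdiff {β : Type*} [AddCommMonoid β] {s : Finset α} {k : ℕ}
    (hk : k ≤ #s) (g : Finset α → β) :
    ∑ t ∈ s.powersetCard k, g (s \ t) = ∑ t ∈ s.powersetCard (#s - k), g t := by
  refine sum_nbij' (s \ ·) (s \ ·) ?_ ?_ ?_ ?_ fun _ _ => rfl <;>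
    intro t ht <;> simp only [mem_powersetCard] at ht ⊢
  · exact ⟨sdiff_subset, by rw [card_sdiff_of_subset ht.1, ht.2]⟩
  · exact ⟨sdiff_subset, by rw [card_sdiff_of_subset ht.1, ht.2]; omega⟩
  · exact sdiff_sdiff_eq_self ht.1
  · exact sdiff_sdiff_eq_self ht.1

theorem sum_powersetCard_prod_inv [Field R] {s : Finset α} {k : ℕ} (hk : k ≤ #s) {f : α → R}
    (hf : ∀ i ∈ s, f i ≠ 0) :
    ∑ t ∈ s.powersetCard k, ∏ i ∈ t, (f i)⁻¹ =
      (∑ t ∈ s.powersetCard (#s - k), ∏ i ∈ t, f i) / ∏ i ∈ s, f i := by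
  rw [← sum_powersetCard_sdiff hk, sum_div]
  refine sum_congr rfl fun t ht => ?_
  have hts := (mem_powersetCard.1 ht).1
  rw [prod_inv_distrib, ← prod_sdiff hts, div_mul_cancel_left₀]
  exact prod_ne_zero_iff.2 fun i hi => hf i (sdiff_subset hi)

end Finset

def oddEsymm (n k : ℕ) : ℚ :=
  ∑ t ∈ (range n).powersetCard k, ∏ i ∈ t, (1 + 2 * i : ℚ)

theorem oddEsymm_zero_right (n : ℕ) : oddEsymm n 0 = 1 := by
  simp [oddEsymm]

theorem oddEsymm_zero_succ (k : ℕ) : oddEsymm 0 (k + 1) = 0 := by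
  rw [oddEsymm, range_zero, powersetCard_eq_empty.2 (by simp), sum_empty]

theorem oddEsymm_succ_succ (n k : ℕ) :
    oddEsymm (n + 1) (k + 1) = oddEsymm n (k + 1) + (1 + 2 * n) * oddEsymm n k := by
  simp only [oddEsymm, range_add_one, sum_powersetCard_succ_insert_prod notMem_range_self]

theorem oddEsymm_one (n : ℕ) : oddEsymm n 1 = n ^ 2 := by
  induction n with
  | zero => exact oddEsymm_zero_succ 0
  | succ n ih => rw [oddEsymm_succ_succ, ih, oddEsymm_zero_right]; push_cast; ring

theorem oddEsymm_two (n : ℕ) : oddEsymm n 2 = n * (n - 1) * (3 * n ^ 2 - n - 1) / 6 := by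
  induction n with
  | zero => simp [oddEsymm_zero_succ 1]
  | succ n ih => rw [oddEsymm_succ_succ, ih, oddEsymm_one]; push_cast; ring

theorem oddEsymm_three (n : ℕ) :
    oddEsymm n 3 = (n - 2) * (n - 1) * n ^ 2 * (n ^ 2 - n - 1) / 6 := by
  induction n with
  | zero => simp [oddEsymm_zero_succ 2]
  | succ n ih => rw [oddEsymm_succ_succ, ih, oddEsymm_two]; push_cast; ring

theorem esymm_k_of_kplus3_general (k : ℕ) :
    ∑ s ∈ (Finset.range (k + 3)).powersetCard k, ∏ i ∈ s, (1 / (1 + 2 * i) : ℚ) =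
    ((k + 1 : ℚ) * (k + 2) * (k + 3) ^ 2 * (k ^ 2 + 5 * k + 5)) /
      (6 * ∏ i ∈ Finset.range (k + 3), ((1 + 2 * i : ℚ))) := by
  have hodd : ∀ i ∈ range (k + 3), (1 + 2 * i : ℚ) ≠ 0 := fun i _ => by positivity
  simp only [one_div]
  rw [sum_powersetCard_prod_inv (by simp) hodd, card_range, show k + 3 - k = 3 by omega,
    ← oddEsymm, oddEsymm_three, div_div]
  push_cast
  ring

theorem esymm_k_of_kplus3 (k : ℕ) (hk : 1 ≤ k) :
    ∑ s ∈ (Finset.range (k + 3)).powersetCard k, ∏ i ∈ s, (1 / (1 + 2 * i) : ℚ) =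
    ((k + 1 : ℚ) * (k + 2) * (k + 3) ^ 2 * (k ^ 2 + 5 * k + 5)) /
      (6 * ∏ i ∈ Finset.range (k + 3), ((1 + 2 * i : ℚ))) :=
  esymm_k_of_kplus3_general k
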